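/- Let 𝒜 be a reduced gST-automaton and X(𝒜) the associated partial HDA (cells (Q ⊔ E)/∼ with e ∼ s(e) if λ(e) is a terminator and e ∼ t(e) if λ(e) is a starter; only defined face maps δ⁰_{U∖S}([e]) = [s(e)] and δ¹_{U∖T}([e]) = [t(e)] for λ(e) = ⟨S,U,T⟩; initial and accepting cells inherited from 𝒜). Then L(X(𝒜)) = L(𝒜). -/

import Mathlib

open scoped Classical

namespace HDA

/-! ### Ipomsets over a fixed alphabet -/

structure PreIpomset (σ : Type) : Type 1 where
  carrier : Type
  fin : Finite carrier
  lt : carrier → carrier → Prop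
  evord : carrier → carrier → Prop
  S : Set carrier
  T : Set carrier
  lab : carrier → σ

namespace PreIpomset

variable {σ : Type}

/-- The precedence order is empty. -/
def Discrete (P : PreIpomset σ) : Prop := ∀ x y, ¬ P.lt x y

/-- Validity: `lt` is a strict partial order which is an interval order, `evord` is acyclic,
for distinct events exactly one of the four relations holds, sources are minimal and
targets are maximal.  (All ipomsets considered are interval.) -/
structure IsIpomset (P : PreIpomset σ) : Prop where
  lt_trans : ∀ x y z, P.lt x y → P.lt y z → P.lt x z
  lt_irrefl : ∀ x, ¬ P.lt x x
  evord_acyclic : ∀ x, ¬ Relation.TransGen P.evord x x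
  total : ∀ x y : P.carrier, x ≠ y → P.lt x y ∨ P.lt y x ∨ P.evord x y ∨ P.evord y x
  lt_not_evord : ∀ x y, P.lt x y → ¬ P.evord x y ∧ ¬ P.evord y x
  src_min : ∀ x ∈ P.S, ∀ y, ¬ P.lt y x
  tgt_max : ∀ x ∈ P.T, ∀ y, ¬ P.lt x y
  interval : ∀ w x y z, P.lt w x → P.lt y z → P.lt w z ∨ P.lt y x

/-- A conclist: a discrete ipomset with empty interfaces. -/
def IsConclist (P : PreIpomset σ) : Prop :=
  P.IsIpomset ∧ P.Discrete ∧ P.S = ∅ ∧ P.T = ∅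

/-- A starter `⟨U∖A,U,U⟩`. -/
def IsStarter (P : PreIpomset σ) : Prop := P.IsIpomset ∧ P.Discrete ∧ P.T = Set.univ

/-- A terminator `⟨U,U,U∖B⟩`. -/
def IsTerminator (P : PreIpomset σ) : Prop := P.IsIpomset ∧ P.Discrete ∧ P.S = Set.univ

/-- An identity `⟨U,U,U⟩`. -/
def IsIdentityIpomset (P : PreIpomset σ) : Prop :=
  P.IsIpomset ∧ P.Discrete ∧ P.S = Set.univ ∧ P.T = Set.univ

def IsProperStarter (P : PreIpomset σ) : Prop := P.IsStarter ∧ P.S ≠ Set.univ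

def IsProperTerminator (P : PreIpomset σ) : Prop := P.IsTerminator ∧ P.T ≠ Set.univ

/-- Isomorphism of (pre)ipomsets. -/
def Iso (P Q : PreIpomset σ) : Prop :=
  ∃ f : P.carrier ≃ Q.carrier,
    (∀ x y, P.lt x y ↔ Q.lt (f x) (f y)) ∧
    (∀ x y, P.evord x y ↔ Q.evord (f x) (f y)) ∧
    (∀ x, x ∈ P.S ↔ f x ∈ Q.S) ∧
    (∀ x, x ∈ P.T ↔ f x ∈ Q.T) ∧
    (∀ x, Q.lab (f x) = P.lab x)

/-- Restriction to a subset of events, with empty interfaces. -/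
def restrict (P : PreIpomset σ) (K : Set P.carrier) : PreIpomset σ where
  carrier := {x : P.carrier // x ∈ K}
  fin := by haveI := P.fin; exact inferInstance
  lt := fun x y => P.lt x.val y.val
  evord := fun x y => P.evord x.val y.val
  S := ∅
  T := ∅
  lab := fun x => P.lab x.val

/-- The source interface of `P` as a conclist. -/
def srcIface (P : PreIpomset σ) : PreIpomset σ := P.restrict P.S

/-- The target interface of `P` as a conclist. -/
def tgtIface (P : PreIpomset σ) : PreIpomset σ := P.restrict P.T

/-- The underlying conclist (forget interfaces). -/
def conclistOf (P : PreIpomset σ) : PreIpomset σ := { P with S := ∅, T := ∅ }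

/-- The identity ipomset `⟨U,U,U⟩` on the conclist underlying `P`. -/
def idOf (P : PreIpomset σ) : PreIpomset σ := { P with S := Set.univ, T := Set.univ }

/-- The discrete ipomset `⟨S,U,T⟩` on the conclist underlying `P`. -/
def withIfaces (P : PreIpomset σ) (S T : Set P.carrier) : PreIpomset σ :=
  { P with S := S, T := T }

/-- The starter `⟨U∖A,U,U⟩` on the conclist underlying `P`. -/
def starter (P : PreIpomset σ) (A : Set P.carrier) : PreIpomset σ :=
  { P with S := Aᶜ, T := Set.univ }

/-- The terminator `⟨U,U,U∖B⟩` on the conclist underlying `P`. -/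
def terminator (P : PreIpomset σ) (B : Set P.carrier) : PreIpomset σ :=
  { P with S := Set.univ, T := Bᶜ }

/-- A matching `T_P ≅ S_Q`, i.e. an isomorphism of interface conclists
along which `P` and `Q` may be glued. -/
structure Matching (P Q : PreIpomset σ) : Type where
  g : {x : P.carrier // x ∈ P.T} ≃ {y : Q.carrier // y ∈ Q.S}
  evord_iff : ∀ x y, P.evord x.val y.val ↔ Q.evord (g x).val (g y).val
  lab_eq : ∀ x, Q.lab (g x).val = P.lab x.val

def gluePOf (P Q : PreIpomset σ) :
    P.carrier ⊕ {y : Q.carrier // y ∉ Q.S} → Option P.carrier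
  | Sum.inl x => some x
  | Sum.inr _ => none

noncomputable def glueQOf (P Q : PreIpomset σ) (m : Matching P Q) :
    P.carrier ⊕ {y : Q.carrier // y ∉ Q.S} → Option Q.carrier
  | Sum.inl x => if h : x ∈ P.T then some (m.g ⟨x, h⟩).val else none
  | Sum.inr y => some y.val

/-- The gluing `P * Q` along a matching `T_P ≅ S_Q`. -/
noncomputable def glue (P Q : PreIpomset σ) (m : Matching P Q) : PreIpomset σ where
  carrier := P.carrier ⊕ {y : Q.carrier // y ∉ Q.S}
  fin := by haveI := P.fin; haveI := Q.fin; exact inferInstance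
  lt := fun u v =>
    (∃ x x', gluePOf P Q u = some x ∧ gluePOf P Q v = some x' ∧ P.lt x x') ∨
    (∃ y y', glueQOf P Q m u = some y ∧ glueQOf P Q m v = some y' ∧ Q.lt y y') ∨
    ((∃ x, gluePOf P Q u = some x ∧ x ∉ P.T) ∧
     (∃ y, glueQOf P Q m v = some y ∧ y ∉ Q.S))
  evord := fun u v =>
    (∃ x x', gluePOf P Q u = some x ∧ gluePOf P Q v = some x' ∧ P.evord x x') ∨
    (∃ y y', glueQOf P Q m u = some y ∧ glueQOf P Q m v = some y' ∧ Q.evord y y')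
  S := {u | ∃ x, gluePOf P Q u = some x ∧ x ∈ P.S}
  T := {u | ∃ y, glueQOf P Q m u = some y ∧ y ∈ Q.T}
  lab := Sum.elim P.lab fun y => Q.lab y.val

/-- `R` is (isomorphic to) the gluing `P * Q`; in particular `T_P ≅ S_Q`. -/
def GlueRel (P Q R : PreIpomset σ) : Prop :=
  ∃ m : Matching P Q, Iso (glue P Q m) R

/-- A choice of gluing (used when a matching is known to exist). -/
noncomputable def glueChoice (P Q : PreIpomset σ) : PreIpomset σ :=
  if h : Nonempty (Matching P Q) then glue P Q h.some else P

/-- `GluesTo l R`: `R` is the gluing of the nonempty list `l` of ipomsets. -/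
inductive GluesTo : List (PreIpomset σ) → PreIpomset σ → Prop
  | single {P R : PreIpomset σ} : Iso P R → GluesTo [P] R
  | cons {P : PreIpomset σ} {l : List (PreIpomset σ)} {R' R : PreIpomset σ} :
      GluesTo l R' → GlueRel P R' R → GluesTo (P :: l) R

/-- Proper starters and proper terminators alternate. -/
def Alternating (l : List (PreIpomset σ)) : Prop :=
  l.Chain' fun P Q => (IsProperStarter P ∧ IsProperTerminator Q) ∨
    (IsProperTerminator P ∧ IsProperStarter Q)

/-- `l` is a sparse step decomposition of `R`: either a single identity, or an
alternating sequence of proper starters and proper terminators gluing to `R`. -/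
def IsSparseDecomp (l : List (PreIpomset σ)) (R : PreIpomset σ) : Prop :=
  GluesTo l R ∧
  ((∃ I, l = [I] ∧ IsIdentityIpomset I) ∨
   ((∀ P ∈ l, IsProperStarter P ∨ IsProperTerminator P) ∧ Alternating l))

/-- `P ∈ iPoms^q`: the sparse step decomposition of `P` does not end with a
proper starter (i.e. it ends with a terminator or is a single identity). -/
def InQ (P : PreIpomset σ) : Prop :=
  ∃ l, IsSparseDecomp l P ∧ ∀ Q, l.getLast? = some Q → ¬ IsProperStarter Q

end PreIpomset

open PreIpomset

variable {σ : Type}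

/-! ### Languages and rational operations -/

def glueLang (L M : Set (PreIpomset σ)) : Set (PreIpomset σ) :=
  {R | ∃ P ∈ L, ∃ Q ∈ M, GlueRel P Q R}

def powLang (L : Set (PreIpomset σ)) : ℕ → Set (PreIpomset σ)
  | 0 => L
  | n + 1 => glueLang L (powLang L n)

/-- `L⁺ = ⋃_{n ≥ 1} Lⁿ`. -/
def plusLang (L : Set (PreIpomset σ)) : Set (PreIpomset σ) := ⋃ n, powLang L n

/-- Rational languages of (interval) ipomsets: generated from `∅` and singletons
(up to isomorphism) of starters and terminators by union, gluing composition and plus. -/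
inductive Rational : Set (PreIpomset σ) → Prop
  | empty : Rational ∅
  | single {P : PreIpomset σ} : IsStarter P ∨ IsTerminator P → Rational {Q | Iso Q P}
  | union {L M : Set (PreIpomset σ)} : Rational L → Rational M → Rational (L ∪ M)
  | concat {L M : Set (PreIpomset σ)} : Rational L → Rational M → Rational (glueLang L M)
  | plus {L : Set (PreIpomset σ)} : Rational L → Rational (plusLang L)

/-! ### P-automata -/

structure PAutomaton (σ : Type) : Type 1 where
  Q : Type
  E : Type
  src : E → Q
  tgt : E → Q
  lab : E → PreIpomset σ
  mu : Q → PreIpomset σ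
  start : Set Q
  accept : Set Q

namespace PAutomaton

variable {σ : Type}

/-- The axioms of a P-automaton: finite sets of states and transitions, states
labelled by conclists, transitions by interval ipomsets, with
`μ(s(e)) ≅ S_{λ(e)}` and `μ(t(e)) ≅ T_{λ(e)}`. -/
def IsPA (A : PAutomaton σ) : Prop :=
  Finite A.Q ∧ Finite A.E ∧
  (∀ q, (A.mu q).IsConclist) ∧ (∀ e, (A.lab e).IsIpomset) ∧
  (∀ e, Iso (A.lab e).srcIface (A.mu (A.src e))) ∧
  (∀ e, Iso (A.lab e).tgtIface (A.mu (A.tgt e)))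

/-- ST-automaton: every label is a starter or a terminator. -/
def IsST (A : PAutomaton σ) : Prop := ∀ e, IsStarter (A.lab e) ∨ IsTerminator (A.lab e)

/-- gST-automaton: every label is discrete. -/
def IsGST (A : PAutomaton σ) : Prop := ∀ e, (A.lab e).Discrete

/-- No transition is labelled by an identity. -/
def NoSilent (A : PAutomaton σ) : Prop := ∀ e, ¬ IsIdentityIpomset (A.lab e)

/-- A reduced gST-automaton: no silent transitions and conditions (a)–(f). -/
def Reduced (A : PAutomaton σ) : Prop :=
  NoSilent A ∧
  (∀ e, A.tgt e ∉ A.start) ∧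
  (∀ e, A.src e ∉ A.accept) ∧
  (∀ e, (A.lab e).T = Set.univ → A.tgt e ∈ A.accept) ∧
  (∀ e, (A.lab e).S = Set.univ → A.src e ∈ A.start) ∧
  (∀ e e', A.src e ∈ A.start → A.src e' = A.src e → e' = e) ∧
  (∀ e e', A.tgt e ∈ A.accept → A.tgt e' = A.tgt e → e' = e)

/-- Paths in a P-automaton, from a state to a state. -/
inductive Path (A : PAutomaton σ) : A.Q → A.Q → Type
  | nil (q : A.Q) : Path A q q
  | cons (e : A.E) {r : A.Q} (rest : Path A (A.tgt e) r) : Path A (A.src e) r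

/-- The (interval) ipomset recognized by a path, up to isomorphism:
the gluing of the labels of its transitions (an identity for a constant path). -/
inductive Rec {A : PAutomaton σ} : ∀ {p r : A.Q}, Path A p r → PreIpomset σ → Prop
  | nil (q : A.Q) (R : PreIpomset σ) : Iso (A.mu q).idOf R → Rec (Path.nil q) R
  | cons (e : A.E) {r : A.Q} (rest : Path A (A.tgt e) r) {R' R : PreIpomset σ} :
      Rec rest R' → GlueRel (A.lab e) R' R → Rec (Path.cons e rest) R

/-- The language of a P-automaton. -/
def lang (A : PAutomaton σ) : Set (PreIpomset σ) :=
  {R | ∃ p r, ∃ α : Path A p r, p ∈ A.start ∧ r ∈ A.accept ∧ Rec α R}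

/-- Dimension of a transition. -/
noncomputable def dim (A : PAutomaton σ) (e : A.E) : ℕ := Nat.card (A.lab e).carrier

/-- Number of bad starter transitions of dimension `n`. -/
noncomputable def bst (A : PAutomaton σ) (n : ℕ) : ℕ :=
  Nat.card {e : A.E // IsProperStarter (A.lab e) ∧ A.tgt e ∉ A.accept ∧ A.dim e = n}

/-- Number of bad terminator transitions of dimension `n`. -/
noncomputable def btt (A : PAutomaton σ) (n : ℕ) : ℕ :=
  Nat.card {e : A.E // IsProperTerminator (A.lab e) ∧ A.src e ∉ A.start ∧ A.dim e = n}

/-- The automaton `𝒜_c`: remove the starter transition `c`; for every transition `e`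
out of `t(c)` add a transition `e*` from `s(c)` to `t(e)` labelled `λ(c) * λ(e)`. -/
noncomputable def Ac (A : PAutomaton σ) (c : A.E) : PAutomaton σ where
  Q := A.Q
  E := {e : A.E // e ≠ c} ⊕ {e : A.E // A.src e = A.tgt c}
  src := Sum.elim (fun e => A.src e.val) fun _ => A.src c
  tgt := Sum.elim (fun e => A.tgt e.val) fun e => A.tgt e.val
  lab := Sum.elim (fun e => A.lab e.val) fun e => glueChoice (A.lab c) (A.lab e.val)
  mu := A.mu
  start := A.start
  accept := A.accept

/-- Disjoint union of two P-automata. -/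
def sumAut (A B : PAutomaton σ) : PAutomaton σ where
  Q := A.Q ⊕ B.Q
  E := A.E ⊕ B.E
  src := Sum.elim (Sum.inl ∘ A.src) (Sum.inr ∘ B.src)
  tgt := Sum.elim (Sum.inl ∘ A.tgt) (Sum.inr ∘ B.tgt)
  lab := Sum.elim A.lab B.lab
  mu := Sum.elim A.mu B.mu
  start := Sum.inl '' A.start ∪ Sum.inr '' B.start
  accept := Sum.inl '' A.accept ∪ Sum.inr '' B.accept

/-- Concatenation `𝒜 * ℬ`: disjoint union together with identity-labelled transitions
from accepting states of `𝒜` to initial states of `ℬ` with isomorphic state labels. -/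
def concatAut (A B : PAutomaton σ) : PAutomaton σ where
  Q := A.Q ⊕ B.Q
  E := A.E ⊕ B.E ⊕
    {pq : A.Q × B.Q // pq.1 ∈ A.accept ∧ pq.2 ∈ B.start ∧ Iso (A.mu pq.1) (B.mu pq.2)}
  src := Sum.elim (Sum.inl ∘ A.src)
    (Sum.elim (Sum.inr ∘ B.src) fun pq => Sum.inl pq.val.1)
  tgt := Sum.elim (Sum.inl ∘ A.tgt)
    (Sum.elim (Sum.inr ∘ B.tgt) fun pq => Sum.inr pq.val.2)
  lab := Sum.elim A.lab (Sum.elim B.lab fun pq => (A.mu pq.val.1).idOf)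
  mu := Sum.elim A.mu B.mu
  start := Sum.inl '' A.start
  accept := Sum.inr '' B.accept

/-- Kleene plus `𝒜⁺`: add identity-labelled transitions from accepting states
to initial states with isomorphic state labels. -/
def plusAut (A : PAutomaton σ) : PAutomaton σ where
  Q := A.Q
  E := A.E ⊕
    {pq : A.Q × A.Q // pq.1 ∈ A.accept ∧ pq.2 ∈ A.start ∧ Iso (A.mu pq.1) (A.mu pq.2)}
  src := Sum.elim A.src fun pq => pq.val.1
  tgt := Sum.elim A.tgt fun pq => pq.val.2
  lab := Sum.elim A.lab fun pq => (A.mu pq.val.1).idOf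
  mu := A.mu
  start := A.start
  accept := A.accept

end PAutomaton

/-! ### Partial HDAs -/

/-- `g` exhibits `V` as the sub-conclist of `U` obtained by removing the events in `K`. -/
def IsFaceEmbed (U : PreIpomset σ) (K : Set U.carrier) (V : PreIpomset σ)
    (g : V.carrier → U.carrier) : Prop :=
  Function.Injective g ∧ Set.range g = Kᶜ ∧
  (∀ u v, V.evord u v ↔ U.evord (g u) (g v)) ∧
  (∀ u, U.lab (g u) = V.lab u)

/-- The data of a partial higher-dimensional automaton: cells labelled by conclists,
partial face maps, initial and accepting cells. -/
structure PrePHDA (σ : Type) : Type 1 where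
  cell : Type
  ev : cell → PreIpomset σ
  face : (x : cell) → Set (ev x).carrier → Set (ev x).carrier → Option cell
  start : Set cell
  accept : Set cell

namespace PrePHDA

variable {σ : Type}

/-- The lax precubical identity: whenever `δ_{A,B}(x)` and `δ_{C,D}(δ_{A,B}(x))` are
defined, `δ_{A∪C,B∪D}(x)` is defined and equal to the composite. -/
def IsLax (X : PrePHDA σ) : Prop :=
  ∀ x (A B : Set (X.ev x).carrier) y, X.face x A B = some y →
    ∀ g, IsFaceEmbed (X.ev x) (A ∪ B) (X.ev y) g →
      ∀ (C D : Set (X.ev y).carrier) z, X.face y C D = some z →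
        X.face x (A ∪ g '' C) (B ∪ g '' D) = some z

/-- The axioms of a partial HDA. -/
def IsPHDA (X : PrePHDA σ) : Prop :=
  (∀ x, (X.ev x).IsConclist) ∧
  (∀ x, X.face x ∅ ∅ = some x) ∧
  (∀ x A B y, X.face x A B = some y →
    Disjoint A B ∧ ∃ g, IsFaceEmbed (X.ev x) (A ∪ B) (X.ev y) g) ∧
  IsLax X

/-- Strictness: `δ_{C,D} ∘ δ_{A,B} = δ_{A∪C,B∪D}` as partial functions. -/
def IsStrict (X : PrePHDA σ) : Prop :=
  IsPHDA X ∧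
  (∀ x (A B : Set (X.ev x).carrier) y, X.face x A B = some y →
    ∀ g, IsFaceEmbed (X.ev x) (A ∪ B) (X.ev y) g →
      ∀ C D : Set (X.ev y).carrier,
        X.face x (A ∪ g '' C) (B ∪ g '' D) = X.face y C D) ∧
  (∀ x (A B C D : Set (X.ev x).carrier),
    Disjoint (A ∪ C) (B ∪ D) → C ∪ D ⊆ (A ∪ B)ᶜ →
    X.face x A B = none → X.face x (A ∪ C) (B ∪ D) = none)

/-- Paths in a partial HDA: sequences of upsteps and downsteps. -/
inductive Path (X : PrePHDA σ) : X.cell → X.cell → Type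
  | nil (x : X.cell) : Path X x x
  | up {x z : X.cell} (y : X.cell) (A : Set (X.ev y).carrier)
      (h : X.face y A ∅ = some x) (rest : Path X y z) : Path X x z
  | down {z w : X.cell} (y : X.cell) (B : Set (X.ev y).carrier)
      (h : X.face y ∅ B = some z) (rest : Path X z w) : Path X y w

/-- Directions of the steps of a path (`true` = upstep). -/
def Path.dirs {X : PrePHDA σ} : {x z : X.cell} → Path X x z → List Bool
  | _, _, .nil _ => []
  | _, _, .up _ _ _ rest => true :: rest.dirs
  | _, _, .down _ _ _ rest => false :: rest.dirs

/-- A path is sparse if upsteps and downsteps alternate. -/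
def Path.Sparse {X : PrePHDA σ} {x z : X.cell} (α : Path X x z) : Prop :=
  α.dirs.Chain' (· ≠ ·)

/-- Concatenation of paths. -/
def Path.comp {X : PrePHDA σ} : {x y z : X.cell} → Path X x y → Path X y z → Path X x z
  | _, _, _, .nil _, β => β
  | _, _, _, .up y A h rest, β => .up y A h (rest.comp β)
  | _, _, _, .down y B h rest, β => .down y B h (rest.comp β)

/-- The ipomset recognized by a path, up to isomorphism: the gluing of the starters
and terminators of its steps (an identity for a constant path). -/
inductive Rec {X : PrePHDA σ} : ∀ {x z : X.cell}, Path X x z → PreIpomset σ → Prop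
  | nil (x : X.cell) (R : PreIpomset σ) :
      Iso (X.ev x).idOf R → Rec (Path.nil x) R
  | up {x z : X.cell} (y : X.cell) (A : Set (X.ev y).carrier)
      (h : X.face y A ∅ = some x) (rest : Path X y z) {R' R : PreIpomset σ} :
      Rec rest R' → GlueRel ((X.ev y).starter A) R' R → Rec (Path.up y A h rest) R
  | down {z w : X.cell} (y : X.cell) (B : Set (X.ev y).carrier)
      (h : X.face y ∅ B = some z) (rest : Path X z w) {R' R : PreIpomset σ} :
      Rec rest R' → GlueRel ((X.ev y).terminator B) R' R → Rec (Path.down y B h rest) R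

/-- The language of a partial HDA. -/
def lang (X : PrePHDA σ) : Set (PreIpomset σ) :=
  {R | ∃ x z, ∃ α : Path X x z, x ∈ X.start ∧ z ∈ X.accept ∧ Rec α R}

/-- `X(K,P)`: cells reachable from `K` by a path recognizing `P`. -/
def track (X : PrePHDA σ) (K : Set X.cell) (P : PreIpomset σ) : Set X.cell :=
  {x | ∃ s, ∃ α : Path X s x, s ∈ K ∧ Rec α P}

/-- Deterministic partial HDA: at most one initial cell per conclist, and lower
face maps are "injective" in the appropriate sense. -/
def Deterministic (X : PrePHDA σ) : Prop :=
  (∀ x y, x ∈ X.start → y ∈ X.start → Iso (X.ev x) (X.ev y) → x = y) ∧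
  (∀ (y y' : X.cell) (A : Set (X.ev y).carrier) (A' : Set (X.ev y').carrier)
      (x : X.cell), X.face y A ∅ = some x → X.face y' A' ∅ = some x →
    (∃ f : (X.ev y).carrier ≃ (X.ev y').carrier,
      (∀ u v, (X.ev y).evord u v ↔ (X.ev y').evord (f u) (f v)) ∧
      (∀ u, (X.ev y').lab (f u) = (X.ev y).lab u) ∧ f '' A = A') → y = y')

end PrePHDA

/-! ### Relational HDAs -/

/-- The data of a relational HDA: face relations instead of partial face maps. -/
structure PreRHDA (σ : Type) : Type 1 where
  cell : Type
  ev : cell → PreIpomset σ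
  face : (x : cell) → Set (ev x).carrier → Set (ev x).carrier → Set cell
  start : Set cell
  accept : Set cell

namespace PreRHDA

variable {σ : Type}

/-- The axioms of a relational HDA, with the lax precubical identity
`δ_{C,D} ∘ δ_{A,B} ⊆ δ_{A∪C,B∪D}`. -/
def IsRHDA (X : PreRHDA σ) : Prop :=
  (∀ x, (X.ev x).IsConclist) ∧
  (∀ x, X.face x ∅ ∅ = {x}) ∧
  (∀ x A B y, y ∈ X.face x A B →
    Disjoint A B ∧ ∃ g, IsFaceEmbed (X.ev x) (A ∪ B) (X.ev y) g) ∧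
  (∀ x (A B : Set (X.ev x).carrier) y, y ∈ X.face x A B →
    ∀ g, IsFaceEmbed (X.ev x) (A ∪ B) (X.ev y) g →
      ∀ (C D : Set (X.ev y).carrier) z, z ∈ X.face y C D →
        z ∈ X.face x (A ∪ g '' C) (B ∪ g '' D))

/-- Paths in a relational HDA. -/
inductive Path (X : PreRHDA σ) : X.cell → X.cell → Type 1
  | nil (x : X.cell) : Path X x x
  | up {x z : X.cell} (y : X.cell) (A : Set (X.ev y).carrier)
      (h : x ∈ X.face y A ∅) (rest : Path X y z) : Path X x z
  | down {z w : X.cell} (y : X.cell) (B : Set (X.ev y).carrier)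
      (h : z ∈ X.face y ∅ B) (rest : Path X z w) : Path X y w

/-- The ipomset recognized by a path in a relational HDA. -/
inductive Rec {X : PreRHDA σ} : ∀ {x z : X.cell}, Path X x z → PreIpomset σ → Prop
  | nil (x : X.cell) (R : PreIpomset σ) :
      Iso (X.ev x).idOf R → Rec (Path.nil x) R
  | up {x z : X.cell} (y : X.cell) (A : Set (X.ev y).carrier)
      (h : x ∈ X.face y A ∅) (rest : Path X y z) {R' R : PreIpomset σ} :
      Rec rest R' → GlueRel ((X.ev y).starter A) R' R → Rec (Path.up y A h rest) R
  | down {z w : X.cell} (y : X.cell) (B : Set (X.ev y).carrier)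
      (h : z ∈ X.face y ∅ B) (rest : Path X z w) {R' R : PreIpomset σ} :
      Rec rest R' → GlueRel ((X.ev y).terminator B) R' R → Rec (Path.down y B h rest) R

/-- The language of a relational HDA. -/
def lang (X : PreRHDA σ) : Set (PreIpomset σ) :=
  {R | ∃ x z, ∃ α : Path X x z, x ∈ X.start ∧ z ∈ X.accept ∧ Rec α R}

/-- The ST-automaton `ST(X)` of a relational HDA `X`: states are cells, transitions
mimic the starting and terminating of events. -/
def stAut (X : PreRHDA σ) : PAutomaton σ where
  Q := X.cell
  E := (Σ q : X.cell, Σ A : Set (X.ev q).carrier, {p : X.cell // p ∈ X.face q A ∅}) ⊕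
       (Σ q : X.cell, Σ B : Set (X.ev q).carrier, {r : X.cell // r ∈ X.face q ∅ B})
  src := Sum.elim (fun t => t.2.2.val) fun t => t.1
  tgt := Sum.elim (fun t => t.1) fun t => t.2.2.val
  lab := Sum.elim (fun t => (X.ev t.1).starter t.2.1) fun t => (X.ev t.1).terminator t.2.1
  mu := X.ev
  start := X.start
  accept := X.accept

end PreRHDA

/-! ### The partial HDA of a reduced gST-automaton -/

open PAutomaton

/-- The cell representing a state `q` in `X(𝒜)`: `q` is merged with a terminator
transition out of it or a starter transition into it, if such exists. -/
noncomputable def cellOfState (A : PAutomaton σ) (q : A.Q) : A.E ⊕ A.Q :=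
  if h : ∃ e, IsTerminator (A.lab e) ∧ A.src e = q then Sum.inl h.choose
  else if h' : ∃ e, IsStarter (A.lab e) ∧ A.tgt e = q then Sum.inl h'.choose
  else Sum.inr q

/-- `X(𝒜)`: cells are `(Q ⊔ E)/∼`, with the only defined (nontrivial) face maps
`δ⁰_{U∖S}([e]) = [s(e)]` and `δ¹_{U∖T}([e]) = [t(e)]` for `λ(e) = ⟨S,U,T⟩`. -/
noncomputable def XofA (A : PAutomaton σ) : PrePHDA σ where
  cell := A.E ⊕ A.Q
  ev := Sum.elim (fun e => (A.lab e).conclistOf) A.mu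
  face := fun x =>
    match x with
    | Sum.inl e => fun As Bs =>
        if As = ∅ ∧ Bs = ∅ then some (Sum.inl e)
        else if As = (A.lab e).Sᶜ ∧ Bs = ∅ then some (cellOfState A (A.src e))
        else if As = ∅ ∧ Bs = (A.lab e).Tᶜ then some (cellOfState A (A.tgt e))
        else none
    | Sum.inr q => fun As Bs =>
        if As = ∅ ∧ Bs = ∅ then some (Sum.inr q) else none
  start := cellOfState A '' A.start
  accept := cellOfState A '' A.accept

end HDA

/-!
A state of `𝒜` becomes a cell of `X(𝒜)`, merged with the terminator transition leaving it or the
starter transition entering it (reducedness leaves at most one candidate, and no identifications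
between different states); every other transition `e` labelled `⟨S,U,T⟩` is a cell `[e]` in which
all of `U` is running. A transition is simulated by the upstep `[s(e)] ↗ [e]` followed by the
downstep `[e] ↘ [t(e)]`, which recognizes `⟨S,U,U⟩ * ⟨U,U,T⟩ = ⟨S,U,T⟩`; for starters and
terminators one of the two steps disappears in the identification. Conversely, apart from
identity steps, a path of `X(𝒜)` can only leave `[e]` through the downstep to `[t(e)]`, so each
upstep into `[e]` pairs with a later downstep and the two merge back into `e`. The merge needs
`⟨S,U,T⟩ * Q ≅ ⟨S,U,U⟩ * (⟨U,U,T⟩ * Q)` with the right-hand side determined by its factors, which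
holds because conclists are rigid: an order automorphism of a finite strict total order is the
identity, so there is at most one matching `T_P ≅ S_Q` along which to glue.
-/

theorem Equiv.eq_refl_of_rel_iff {α : Type*} [Finite α] {r : α → α → Prop}
    (hacyc : ∀ x, ¬ Relation.TransGen r x x) (htot : ∀ x y, x ≠ y → r x y ∨ r y x)
    (f : α ≃ α) (hf : ∀ x y, r x y ↔ r (f x) (f y)) : f = Equiv.refl α := by
  have : Std.Irrefl (Relation.TransGen r) := ⟨hacyc⟩
  ext x
  -- At a minimal non-fixed point `x`, whichever of `f x` and `f⁻¹ x` lies below `x` is fixed.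
  induction x using (Finite.wellFounded_of_trans_of_irrefl (Relation.TransGen r)).induction with
  | _ x ih =>
    by_contra hne
    rcases htot (f x) x hne with h | h
    · exact hne (f.injective (ih (f x) (.single h)))
    · have h' : r (f.symm x) x := by rwa [hf, f.apply_symm_apply]
      exact hne (by simpa using congrArg f (ih _ (.single h')))

namespace HDA

open PreIpomset Set

namespace PreIpomset

variable {σ : Type} {P Q R : PreIpomset σ}

theorem Iso.refl (P : PreIpomset σ) : Iso P P :=
  ⟨Equiv.refl _, fun _ _ => Iff.rfl, fun _ _ => Iff.rfl, fun _ => Iff.rfl, fun _ => Iff.rfl,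
    fun _ => rfl⟩

theorem Iso.symm (h : Iso P Q) : Iso Q P := by
  obtain ⟨f, hlt, hev, hS, hT, hlab⟩ := h
  refine ⟨f.symm, fun x y => ?_, fun x y => ?_, fun x => ?_, fun x => ?_, fun x => ?_⟩
  · simp [hlt]
  · simp [hev]
  · simp [hS]
  · simp [hT]
  · simp [← hlab]

theorem Iso.trans (h : Iso P Q) (h' : Iso Q R) : Iso P R := by
  obtain ⟨f, hlt, hev, hS, hT, hlab⟩ := h
  obtain ⟨g, glt, gev, gS, gT, glab⟩ := h'
  exact ⟨f.trans g, fun x y => (hlt x y).trans (glt _ _), fun x y => (hev x y).trans (gev _ _),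
    fun x => (hS x).trans (gS _), fun x => (hT x).trans (gT _),
    fun x => (glab (f x)).trans (hlab x)⟩

theorem iso_idOf_of_iso_restrict {K : Set P.carrier} (hP : P.Discrete)
    (hQ : Q.Discrete) (hK : K = univ) (h : Iso (P.restrict K) Q) : Iso P.idOf Q.idOf := by
  subst hK
  obtain ⟨f, -, hev, -, -, hlab⟩ := h
  exact ⟨(Equiv.Set.univ _).symm.trans f, fun x y => iff_of_false (hP x y) (hQ _ _),
    fun x y => hev ⟨x, trivial⟩ ⟨y, trivial⟩, fun _ => Iff.rfl, fun _ => Iff.rfl,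
    fun x => hlab ⟨x, trivial⟩⟩

theorem GlueRel.trans_iso {R' : PreIpomset σ} (h : GlueRel P Q R) (h' : Iso R R') :
    GlueRel P Q R' :=
  let ⟨m, i⟩ := h; ⟨m, i.trans h'⟩

@[simp] theorem gluePOf_inl (x : P.carrier) : gluePOf P Q (.inl x) = some x := rfl

@[simp] theorem gluePOf_inr (y : {y : Q.carrier // y ∉ Q.S}) :
    gluePOf P Q (.inr y) = none := rfl

@[simp] theorem glueQOf_inl (m : Matching P Q) (x : P.carrier) :
    glueQOf P Q m (.inl x) = if h : x ∈ P.T then some (m.g ⟨x, h⟩).val else none := rfl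

@[simp] theorem glueQOf_inr (m : Matching P Q) (y : {y : Q.carrier // y ∉ Q.S}) :
    glueQOf P Q m (.inr y) = some y.val := rfl

theorem glue_lt (m : Matching P Q) (u v : (glue P Q m).carrier) :
    (glue P Q m).lt u v ↔
      (∃ x x', gluePOf P Q u = some x ∧ gluePOf P Q v = some x' ∧ P.lt x x') ∨
      (∃ y y', glueQOf P Q m u = some y ∧ glueQOf P Q m v = some y' ∧ Q.lt y y') ∨
      ((∃ x, gluePOf P Q u = some x ∧ x ∉ P.T) ∧ (∃ y, glueQOf P Q m v = some y ∧ y ∉ Q.S)) :=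
  Iff.rfl

theorem glue_evord (m : Matching P Q) (u v : (glue P Q m).carrier) :
    (glue P Q m).evord u v ↔
      (∃ x x', gluePOf P Q u = some x ∧ gluePOf P Q v = some x' ∧ P.evord x x') ∨
      (∃ y y', glueQOf P Q m u = some y ∧ glueQOf P Q m v = some y' ∧ Q.evord y y') :=
  Iff.rfl

theorem mem_glue_S (m : Matching P Q) (u : (glue P Q m).carrier) :
    u ∈ (glue P Q m).S ↔ ∃ x, gluePOf P Q u = some x ∧ x ∈ P.S :=
  Iff.rfl

theorem mem_glue_T (m : Matching P Q) (u : (glue P Q m).carrier) :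
    u ∈ (glue P Q m).T ↔ ∃ y, glueQOf P Q m u = some y ∧ y ∈ Q.T :=
  Iff.rfl

theorem glue_starter_iso (hd : P.Discrete) (hT : P.T = univ)
    (m : Matching P R) :
    Iso (glue P R m) {R with S := (fun x => (m.g x).val) '' {x | x.val ∈ P.S}} := by
  have hTm : ∀ x, x ∈ P.T := fun x => hT ▸ mem_univ x
  obtain ⟨F, hFinl, hFinr⟩ : ∃ F : (glue P R m).carrier ≃ R.carrier,
      (∀ x, F (.inl x) = (m.g ⟨x, hTm x⟩).val) ∧ ∀ y, F (.inr y) = y.val :=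
    ⟨(Equiv.sumCongr ((Equiv.subtypeUnivEquiv hTm).symm.trans m.g) (Equiv.refl _)).trans
      (Equiv.sumCompl (· ∈ R.S)), fun _ => rfl, fun _ => rfl⟩
  have hF : ∀ u : (glue P R m).carrier, glueQOf P R m u = some (F u) := by
    rintro (x | y) <;> simp [hFinl, hFinr, hTm]
  have hlt : ∀ u v, (glue P R m).lt u v ↔ R.lt (F u) (F v) := by
    simp [glue_lt, hF, hd _ _, hTm]
  have hev : ∀ u v, (glue P R m).evord u v ↔ R.evord (F u) (F v) := by
    intro u v
    rw [glue_evord, hF, hF]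
    rcases u with x | y <;> rcases v with x' | y'
    · simp [hFinl, m.evord_iff ⟨x, hTm x⟩ ⟨x', hTm x'⟩]
    all_goals simp
  have hS : ∀ u, u ∈ (glue P R m).S ↔ F u ∈ (fun x => (m.g x).val) '' {x | x.val ∈ P.S} := by
    intro u
    rw [mem_glue_S]
    rcases u with x | y
    · simp only [gluePOf_inl, Option.some.injEq, exists_eq_left', hFinl]
      constructor
      · exact fun hx => ⟨⟨x, hTm x⟩, hx, rfl⟩
      · rintro ⟨x', hx', he⟩
        rwa [m.g.injective (Subtype.ext he)] at hx'
    · refine iff_of_false (by simp) ?_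
      rintro ⟨x', -, he⟩
      exact y.2 (hFinr y ▸ he ▸ (m.g x').2)
  have hT : ∀ u, u ∈ (glue P R m).T ↔ F u ∈ R.T := by
    simp [mem_glue_T, hF]
  have hlab : ∀ u, R.lab (F u) = (glue P R m).lab u := by
    rintro (x | y)
    · rw [hFinl]; exact m.lab_eq _
    · rw [hFinr]; rfl
  exact ⟨F, hlt, hev, hS, hT, hlab⟩

theorem glue_iso_of_identity {I : PreIpomset σ} (hd : I.Discrete) (hS : I.S = univ)
    (hT : I.T = univ) (m : Matching I R) : Iso (glue I R m) R := by
  have hS' : (fun x => (m.g x).val) '' {x | x.val ∈ I.S} = R.S := by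
    ext r
    refine ⟨fun ⟨x, _, hx⟩ => hx ▸ (m.g x).2, fun hr => ⟨m.g.symm ⟨r, hr⟩, ?_, by simp⟩⟩
    simp [hS]
  have h := glue_starter_iso hd hT m
  rwa [hS'] at h

theorem GlueRel.iso_of_identity {I : PreIpomset σ} (hd : I.Discrete) (hS : I.S = univ)
    (hT : I.T = univ) (h : GlueRel I Q R) : Iso Q R :=
  let ⟨m, i⟩ := h; (glue_iso_of_identity hd hS hT m).symm.trans i

theorem GlueRel.iso_of_starter_empty (hd : P.Discrete)
    (h : GlueRel (P.starter ∅) Q R) : Iso Q R :=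
  GlueRel.iso_of_identity (I := P.starter ∅) hd compl_empty rfl h

theorem GlueRel.iso_of_terminator_empty (hd : P.Discrete)
    (h : GlueRel (P.terminator ∅) Q R) : Iso Q R :=
  GlueRel.iso_of_identity (I := P.terminator ∅) hd rfl compl_empty h

abbrev starterPart (P : PreIpomset σ) : PreIpomset σ := {P with T := univ}

abbrev terminatorPart (P : PreIpomset σ) : PreIpomset σ := {P with S := univ}

def Matching.toTerminatorPart (m : Matching P Q) :
    Matching P.terminatorPart Q :=
  ⟨m.g, m.evord_iff, m.lab_eq⟩

theorem starterPart_eq_self (hT : P.T = univ) : P.starterPart = P := by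
  rw [starterPart, ← hT]

theorem terminatorPart_eq_self (hS : P.S = univ) : P.terminatorPart = P := by
  rw [terminatorPart, ← hS]

theorem IsIpomset.starterPart (hP : P.IsIpomset) (hd : P.Discrete) :
    P.starterPart.IsIpomset :=
  ⟨hP.lt_trans, hP.lt_irrefl, hP.evord_acyclic, hP.total, hP.lt_not_evord, hP.src_min,
    fun x _ y => hd x y, hP.interval⟩

theorem glue_evord_inl_inl (m : Matching P Q) (x x' : P.carrier) :
    (glue P Q m).evord (.inl x) (.inl x') ↔ P.evord x x' := by
  simp only [glue, gluePOf_inl, glueQOf_inl, Option.some.injEq]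
  constructor
  · rintro (⟨a, b, rfl, rfl, hab⟩ | ⟨a, b, ha, hb, hab⟩)
    · exact hab
    · split_ifs at ha hb with hx hx'
      cases ha; cases hb
      exact (m.evord_iff ⟨x, hx⟩ ⟨x', hx'⟩).mpr hab
  · exact fun h => .inl ⟨x, x', rfl, rfl, h⟩

theorem inl_mem_glue_S (m : Matching P Q) {x : P.carrier} :
    (.inl x : (glue P Q m).carrier) ∈ (glue P Q m).S ↔ x ∈ P.S :=
  ⟨fun ⟨_, h, hx⟩ => Option.some.inj h ▸ hx, fun h => ⟨x, rfl, h⟩⟩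

theorem inr_not_mem_glue_S (m : Matching P Q)
    {y : {y : Q.carrier // y ∉ Q.S}} : (.inr y : (glue P Q m).carrier) ∉ (glue P Q m).S :=
  fun ⟨_, h, _⟩ => Option.some_ne_none _ h.symm

-- `gluePOf` and `glueQOf` are defined by matching, so the two gluings agree definitionally
-- only after case analysis on the events.
theorem iso_glue_terminatorPart (m : Matching P Q) :
    Iso {glue P.terminatorPart Q m.toTerminatorPart with S := (glue P Q m).S} (glue P Q m) := by
  refine ⟨Equiv.refl _, ?_, ?_, fun _ => Iff.rfl, ?_, fun _ => rfl⟩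
  · rintro (x | y) (x' | y') <;> exact Iff.rfl
  · rintro (x | y) (x' | y') <;> exact Iff.rfl
  · rintro (x | y) <;> exact Iff.rfl

theorem glueRel_starterPart_glue_terminatorPart (hd : P.Discrete)
    (m : Matching P Q) :
    GlueRel P.starterPart (glue P.terminatorPart Q m.toTerminatorPart) (glue P Q m) := by
  set W := glue P.terminatorPart Q m.toTerminatorPart
  let g : {x // x ∈ P.starterPart.T} ≃ {w // w ∈ W.S} :=
    Equiv.ofBijective (fun x => ⟨.inl x.1, (inl_mem_glue_S _).mpr trivial⟩) <| by
      refine ⟨fun x x' h => Subtype.ext (Sum.inl_injective (congrArg Subtype.val h)), ?_⟩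
      rintro ⟨x | y, hw⟩
      · exact ⟨⟨x, trivial⟩, rfl⟩
      · exact absurd hw (inr_not_mem_glue_S _)
  let m' : Matching P.starterPart W :=
    ⟨g, fun x x' => (glue_evord_inl_inl m.toTerminatorPart x.1 x'.1).symm, fun _ => rfl⟩
  have hS : (fun x => (m'.g x).val) '' {x | x.val ∈ P.S} = (glue P Q m).S := by
    ext (x | y)
    · refine Iff.trans ?_ (inl_mem_glue_S m).symm
      exact ⟨fun ⟨x', hx', he⟩ => Sum.inl_injective he ▸ hx', fun hx => ⟨⟨x, trivial⟩, hx, rfl⟩⟩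
    · exact iff_of_false (fun ⟨_, _, he⟩ => Sum.inl_ne_inr he) (inr_not_mem_glue_S _)
  have h := glue_starter_iso (P := P.starterPart) hd rfl m'
  rw [hS] at h
  exact ⟨m', h.trans (iso_glue_terminatorPart m)⟩

theorem glue_congr_right {Q' : PreIpomset σ} (m : Matching P Q) (h : Iso Q Q') :
    ∃ m' : Matching P Q', Iso (glue P Q m) (glue P Q' m') := by
  obtain ⟨f, hlt, hev, hS, hT, hlab⟩ := h
  let m' : Matching P Q' := ⟨m.g.trans (f.subtypeEquiv hS), fun x y => by
    simp [m.evord_iff, hev], fun x => by simp [hlab, m.lab_eq]⟩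
  obtain ⟨F, hFinl, hFinr⟩ : ∃ F : (glue P Q m).carrier ≃ (glue P Q' m').carrier,
      (∀ x, F (.inl x) = .inl x) ∧ ∀ y, F (.inr y) = .inr ⟨f y, (hS y).not.mp y.2⟩ :=
    ⟨Equiv.sumCongr (Equiv.refl _) (f.subtypeEquiv fun y => (hS y).not), fun _ => rfl,
      fun _ => rfl⟩
  have hP : ∀ u, gluePOf P Q' (F u) = gluePOf P Q u := by
    rintro (x | y) <;> simp [hFinl, hFinr]
  have hQ : ∀ u, glueQOf P Q' m' (F u) = (glueQOf P Q m u).map f := by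
    rintro (x | y)
    · simp only [hFinl, glueQOf_inl]
      split_ifs <;> rfl
    · simp [hFinr]
  refine ⟨m', F, fun u v => ?_, fun u v => ?_, fun u => ?_, fun u => ?_, ?_⟩
  · rw [glue_lt, glue_lt, hP, hP, hQ, hQ]
    simp [hlt, hS]
  · rw [glue_evord, glue_evord, hP, hP, hQ, hQ]
    simp [hev]
  · rw [mem_glue_S, mem_glue_S, hP]
  · rw [mem_glue_T, mem_glue_T, hQ]
    simp [hT]
  · rintro (x | y)
    · rw [hFinl]; rfl
    · rw [hFinr]; exact hlab y

theorem GlueRel.congr_right {Q' : PreIpomset σ} (h : GlueRel P Q R) (hQ : Iso Q Q') :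
    GlueRel P Q' R :=
  let ⟨m, i⟩ := h
  let ⟨m', j⟩ := glue_congr_right m hQ
  ⟨m', j.symm.trans i⟩

theorem Matching.subsingleton (hP : P.IsIpomset) :
    Subsingleton (Matching P Q) := by
  refine ⟨fun ⟨g, hg, _⟩ ⟨g', hg', _⟩ => ?_⟩
  have : Finite P.carrier := P.fin
  have hid := Equiv.eq_refl_of_rel_iff (r := fun a b : {x // x ∈ P.T} => P.evord a b)
    (fun x hx => hP.evord_acyclic x (hx.lift Subtype.val fun _ _ h => h))
    (fun x y hxy => ?_) (g.trans g'.symm) fun x y => by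
      rw [Equiv.trans_apply, Equiv.trans_apply, hg, hg', Equiv.apply_symm_apply,
        Equiv.apply_symm_apply]
  · obtain rfl : g = g' := Equiv.ext fun x => g'.symm_apply_eq.mp (Equiv.ext_iff.mp hid x)
    rfl
  · rcases hP.total x y (Subtype.coe_ne_coe.mpr hxy) with h | h | h | h
    · exact absurd h (hP.tgt_max x x.2 y)
    · exact absurd h (hP.tgt_max y y.2 x)
    · exact .inl h
    · exact .inr h

theorem GlueRel.iso {R' : PreIpomset σ} (hP : P.IsIpomset) (h : GlueRel P Q R)
    (h' : GlueRel P Q R') : Iso R R' := by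
  obtain ⟨m, i⟩ := h
  obtain ⟨m', i'⟩ := h'
  obtain rfl := (Matching.subsingleton hP).elim m m'
  exact i.symm.trans i'

theorem GlueRel.split (hd : P.Discrete) (h : GlueRel P Q R) :
    ∃ R₁, GlueRel P.terminatorPart Q R₁ ∧ GlueRel P.starterPart R₁ R :=
  let ⟨m, i⟩ := h
  ⟨_, ⟨m.toTerminatorPart, Iso.refl _⟩, (glueRel_starterPart_glue_terminatorPart hd m).trans_iso i⟩

theorem GlueRel.merge {R₁ : PreIpomset σ} (hP : P.IsIpomset) (hd : P.Discrete)
    (h₁ : GlueRel P.terminatorPart Q R₁) (h₂ : GlueRel P.starterPart R₁ R) : GlueRel P Q R := by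
  obtain ⟨m₁, i₁⟩ := h₁
  let m : Matching P Q := ⟨m₁.g, m₁.evord_iff, m₁.lab_eq⟩
  have h := (glueRel_starterPart_glue_terminatorPart hd m).congr_right i₁
  exact ⟨m, h.iso (hP.starterPart hd) h₂⟩

end PreIpomset

namespace PAutomaton

variable {σ : Type} {A : PAutomaton σ}

def langFrom (A : PAutomaton σ) (q : A.Q) : Set (PreIpomset σ) :=
  {R | ∃ r, ∃ β : Path A q r, r ∈ A.accept ∧ Rec β R}

theorem Rec.of_iso {p r : A.Q} {β : Path A p r} {R R' : PreIpomset σ} (h : Rec β R)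
    (hR : Iso R R') : Rec β R' := by
  cases h with
  | nil _ _ h₀ => exact .nil _ _ (h₀.trans hR)
  | cons e rest hrest hglue => exact .cons e rest hrest (hglue.trans_iso hR)

theorem langFrom_of_iso {q : A.Q} {R R' : PreIpomset σ} (h : R ∈ A.langFrom q)
    (hR : Iso R R') : R' ∈ A.langFrom q :=
  let ⟨r, β, hr, hβ⟩ := h; ⟨r, β, hr, hβ.of_iso hR⟩

theorem mem_langFrom_of_mem_accept {q : A.Q} {R : PreIpomset σ} (hq : q ∈ A.accept)
    (h : Iso (A.mu q).idOf R) : R ∈ A.langFrom q :=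
  ⟨q, .nil q, hq, .nil q R h⟩

theorem mem_langFrom_src {e : A.E} {R' R : PreIpomset σ} (h : R' ∈ A.langFrom (A.tgt e))
    (hglue : GlueRel (A.lab e) R' R) : R ∈ A.langFrom (A.src e) :=
  let ⟨r, β, hr, hβ⟩ := h; ⟨r, .cons e β, hr, .cons e β hβ hglue⟩

end PAutomaton

open PAutomaton

section CellOfState

variable {σ : Type} {A : PAutomaton σ}

theorem cellOfState_eq_inl {q : A.Q} {e : A.E} (h : cellOfState A q = .inl e) :
    (IsTerminator (A.lab e) ∧ A.src e = q) ∨ (IsStarter (A.lab e) ∧ A.tgt e = q) := by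
  unfold cellOfState at h
  split_ifs at h with h₁ h₂
  · exact .inl (Sum.inl.inj h ▸ h₁.choose_spec)
  · exact .inr (Sum.inl.inj h ▸ h₂.choose_spec)

theorem cellOfState_eq_inr {q q' : A.Q} (h : cellOfState A q = .inr q') : q' = q := by
  unfold cellOfState at h
  split_ifs at h
  exact (Sum.inr.inj h).symm

theorem cellOfState_injective (hr : A.Reduced) : Function.Injective (cellOfState A) := by
  have not_both : ∀ e, IsStarter (A.lab e) → ¬ IsTerminator (A.lab e) :=
    fun e hs ht => hr.1 e ⟨hs.1, hs.2.1, ht.2.2, hs.2.2⟩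
  intro q q' h
  cases hq : cellOfState A q with
  | inl e =>
    rw [hq] at h
    rcases cellOfState_eq_inl hq, cellOfState_eq_inl h.symm with
      ⟨⟨ht, rfl⟩ | ⟨hs, rfl⟩, ⟨ht', hsrc⟩ | ⟨hs', htgt⟩⟩
    · exact hsrc
    · exact absurd ht (not_both e hs')
    · exact absurd ht' (not_both e hs)
    · exact htgt
  | inr q₀ =>
    rw [hq] at h
    rw [← cellOfState_eq_inr hq, ← cellOfState_eq_inr h.symm]

theorem cellOfState_src (hr : A.Reduced) {e : A.E} (ht : IsTerminator (A.lab e)) :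
    cellOfState A (A.src e) = .inl e := by
  obtain ⟨-, -, -, -, hinit, hinit_unique, -⟩ := hr
  have hex : ∃ e', IsTerminator (A.lab e') ∧ A.src e' = A.src e := ⟨e, ht, rfl⟩
  rw [cellOfState, dif_pos hex]
  exact congrArg _ (hinit_unique e _ (hinit e ht.2.2) hex.choose_spec.2)

theorem cellOfState_tgt (hr : A.Reduced) {e : A.E} (hs : IsStarter (A.lab e)) :
    cellOfState A (A.tgt e) = .inl e := by
  obtain ⟨-, -, hnoacc, hacc, -, -, hacc_unique⟩ := hr
  have hnex : ¬ ∃ e', IsTerminator (A.lab e') ∧ A.src e' = A.tgt e :=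
    fun ⟨e', _, he'⟩ => hnoacc e' (he' ▸ hacc e hs.2.2)
  have hex : ∃ e', IsStarter (A.lab e') ∧ A.tgt e' = A.tgt e := ⟨e, hs, rfl⟩
  rw [cellOfState, dif_neg hnex, dif_pos hex]
  exact congrArg _ (hacc_unique e _ (hacc e hs.2.2) hex.choose_spec.2)

end CellOfState

namespace XofA

variable {σ : Type} {A : PAutomaton σ}

theorem face_inr {q : A.Q} {As Bs : Set ((XofA A).ev (.inr q)).carrier} {x : (XofA A).cell}
    (h : (XofA A).face (.inr q) As Bs = some x) : As = ∅ ∧ Bs = ∅ ∧ x = .inr q := by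
  dsimp only [XofA] at h
  split_ifs at h with h₀
  exact ⟨h₀.1, h₀.2, (Option.some.inj h).symm⟩

theorem face_inl_up {e : A.E} {As : Set ((XofA A).ev (.inl e)).carrier} {x : (XofA A).cell}
    (h : (XofA A).face (.inl e) As ∅ = some x) :
    (As = ∅ ∧ x = .inl e) ∨
      ((A.lab e).S ≠ univ ∧ As = (A.lab e).Sᶜ ∧ x = cellOfState A (A.src e)) := by
  dsimp only [XofA] at h
  split_ifs at h with h₀ h₁ h₂
  · exact .inl ⟨h₀.1, (Option.some.inj h).symm⟩
  · refine .inr ⟨fun hS => h₀ ⟨?_, rfl⟩, h₁.1, (Option.some.inj h).symm⟩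
    rw [h₁.1, hS]
    exact compl_univ
  · exact absurd ⟨h₂.1, rfl⟩ h₀

theorem face_inl_down {e : A.E} {Bs : Set ((XofA A).ev (.inl e)).carrier} {x : (XofA A).cell}
    (h : (XofA A).face (.inl e) ∅ Bs = some x) :
    (Bs = ∅ ∧ x = .inl e) ∨
      ((A.lab e).T ≠ univ ∧ Bs = (A.lab e).Tᶜ ∧ x = cellOfState A (A.tgt e)) := by
  dsimp only [XofA] at h
  split_ifs at h with h₀ h₁ h₂
  · exact .inl ⟨h₀.2, (Option.some.inj h).symm⟩
  · exact absurd ⟨rfl, h₁.2⟩ h₀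
  · refine .inr ⟨fun hT => h₀ ⟨rfl, ?_⟩, h₂.2, (Option.some.inj h).symm⟩
    rw [h₂.2, hT]
    exact compl_univ

theorem face_up {e : A.E} (hS : (A.lab e).S ≠ univ) :
    (XofA A).face (.inl e) (A.lab e).Sᶜ ∅ = some (cellOfState A (A.src e)) := by
  dsimp only [XofA]
  rw [if_neg fun h => hS (compl_empty_iff.mp h.1), if_pos ⟨rfl, rfl⟩]

theorem face_down {e : A.E} (hT : (A.lab e).T ≠ univ) :
    (XofA A).face (.inl e) ∅ (A.lab e).Tᶜ = some (cellOfState A (A.tgt e)) := by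
  dsimp only [XofA]
  rw [if_neg fun h => hT (compl_empty_iff.mp h.2), if_neg fun h => hT (compl_empty_iff.mp h.2),
    if_pos ⟨rfl, rfl⟩]

theorem ev_inl_starter (e : A.E) :
    ((XofA A).ev (.inl e)).starter (A.lab e).Sᶜ = (A.lab e).starterPart := by
  show PreIpomset.mk _ _ _ _ (A.lab e).Sᶜᶜ _ _ = _
  rw [compl_compl]
  rfl

theorem ev_inl_terminator (e : A.E) :
    ((XofA A).ev (.inl e)).terminator (A.lab e).Tᶜ = (A.lab e).terminatorPart := by
  show PreIpomset.mk _ _ _ _ _ (A.lab e).Tᶜᶜ _ = _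
  rw [compl_compl]
  rfl

theorem ev_discrete (hA : A.IsPA) (hg : A.IsGST) (x : (XofA A).cell) :
    ((XofA A).ev x).Discrete := by
  rcases x with e | q
  · exact hg e
  · exact (hA.2.2.1 q).2.1

theorem iso_idOf_ev_cellOfState (hA : A.IsPA) (hg : A.IsGST) (q : A.Q) :
    Iso ((XofA A).ev (cellOfState A q)).idOf (A.mu q).idOf := by
  obtain ⟨-, -, hmu, -, hsrc, htgt⟩ := hA
  cases hc : cellOfState A q with
  | inr q' =>
    obtain rfl := cellOfState_eq_inr hc
    exact Iso.refl _
  | inl e =>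
    rcases cellOfState_eq_inl hc with ⟨ht, rfl⟩ | ⟨hs, rfl⟩
    · exact iso_idOf_of_iso_restrict (hg e) (hmu _).2.1 ht.2.2 (hsrc e)
    · exact iso_idOf_of_iso_restrict (hg e) (hmu _).2.1 hs.2.2 (htgt e)

end XofA

section Language

variable {σ : Type} {A : PAutomaton σ}

theorem exists_rec_XofA_src (hA : A.IsPA) (hg : A.IsGST) (hr : A.Reduced) (e : A.E) {r : A.Q}
    {R' R : PreIpomset σ}
    (h : ∃ α : PrePHDA.Path (XofA A) (cellOfState A (A.tgt e)) (cellOfState A r),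
      PrePHDA.Rec α R')
    (hglue : GlueRel (A.lab e) R' R) :
    ∃ α : PrePHDA.Path (XofA A) (cellOfState A (A.src e)) (cellOfState A r),
      PrePHDA.Rec α R := by
  have hlab := hA.2.2.2.1 e
  by_cases hS : (A.lab e).S = univ
  · have hT : (A.lab e).T ≠ univ := fun hT => hr.1 e ⟨hlab, hg e, hS, hT⟩
    rw [cellOfState_src hr ⟨hlab, hg e, hS⟩]
    obtain ⟨α, hα⟩ := h
    refine ⟨.down (Sum.inl e) _ (XofA.face_down hT) α, .down _ _ _ α hα ?_⟩
    rwa [XofA.ev_inl_terminator, terminatorPart_eq_self hS]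
  by_cases hT : (A.lab e).T = univ
  · rw [cellOfState_tgt hr ⟨hlab, hg e, hT⟩] at h
    obtain ⟨α, hα⟩ := h
    refine ⟨.up (Sum.inl e) _ (XofA.face_up hS) α, .up _ _ _ α hα ?_⟩
    rwa [XofA.ev_inl_starter, starterPart_eq_self hT]
  obtain ⟨α, hα⟩ := h
  obtain ⟨R₁, h₁, h₂⟩ := hglue.split (hg e)
  refine ⟨.up (Sum.inl e) _ (XofA.face_up hS) (.down (Sum.inl e) _ (XofA.face_down hT) α),
    .up _ _ _ _ (R' := R₁) (.down _ _ _ α hα ?_) ?_⟩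
  · rwa [XofA.ev_inl_terminator]
  · rwa [XofA.ev_inl_starter]

theorem exists_rec_XofA (hA : A.IsPA) (hg : A.IsGST) (hr : A.Reduced) {p r : A.Q}
    {β : PAutomaton.Path A p r} {R : PreIpomset σ} (h : PAutomaton.Rec β R) :
    ∃ α : PrePHDA.Path (XofA A) (cellOfState A p) (cellOfState A r), PrePHDA.Rec α R := by
  induction h with
  | nil q R hiso =>
    exact ⟨.nil _, .nil _ _ ((XofA.iso_idOf_ev_cellOfState hA hg q).trans hiso)⟩
  | cons e _ _ hglue ih => exact exists_rec_XofA_src hA hg hr e ih hglue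

/-- A cell `[e]` of a transition that is neither a starter nor a terminator stands for the middle
of `e`: all of `U` has started, so `𝒜` still has to terminate `U ∖ T` and then continue from
`t(e)`. -/
def XofA.AcceptsFrom (A : PAutomaton σ) (x : (XofA A).cell) (R : PreIpomset σ) : Prop :=
  (∀ q, x = cellOfState A q → R ∈ A.langFrom q) ∧
  ∀ e, x = Sum.inl e → (A.lab e).S ≠ univ → (A.lab e).T ≠ univ →
    ∃ R₃ ∈ A.langFrom (A.tgt e), GlueRel (A.lab e).terminatorPart R₃ R

namespace XofA.AcceptsFrom

theorem of_iso {x : (XofA A).cell} {R R' : PreIpomset σ} (h : AcceptsFrom A x R)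
    (hR : Iso R R') : AcceptsFrom A x R' :=
  ⟨fun q hq => langFrom_of_iso (h.1 q hq) hR, fun e he hS hT =>
    let ⟨R₃, hR₃, hglue⟩ := h.2 e he hS hT
    ⟨R₃, hR₃, hglue.trans_iso hR⟩⟩

theorem of_mem_accept (hA : A.IsPA) (hg : A.IsGST) (hr : A.Reduced) {x : (XofA A).cell}
    {R : PreIpomset σ} (hx : x ∈ (XofA A).accept) (h : Iso ((XofA A).ev x).idOf R) :
    AcceptsFrom A x R := by
  obtain ⟨q', hq', rfl⟩ := hx
  refine ⟨fun q hq => ?_, fun e he hS hT => ?_⟩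
  · obtain rfl := cellOfState_injective hr hq
    exact mem_langFrom_of_mem_accept hq' ((iso_idOf_ev_cellOfState hA hg q').symm.trans h)
  · rcases cellOfState_eq_inl he with ⟨ht, -⟩ | ⟨hs, -⟩
    · exact absurd ht.2.2 hS
    · exact absurd hs.2.2 hT

theorem up (hA : A.IsPA) (hg : A.IsGST) (hr : A.Reduced) {y x : (XofA A).cell}
    {As : Set ((XofA A).ev y).carrier} {R' R : PreIpomset σ}
    (hface : (XofA A).face y As ∅ = some x) (hy : AcceptsFrom A y R')
    (hglue : GlueRel (((XofA A).ev y).starter As) R' R) : AcceptsFrom A x R := by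
  cases y with
  | inr q =>
    obtain ⟨rfl, -, rfl⟩ := face_inr hface
    exact hy.of_iso (hglue.iso_of_starter_empty (ev_discrete hA hg _))
  | inl e =>
    rcases face_inl_up hface with ⟨rfl, rfl⟩ | ⟨hS, rfl, rfl⟩
    · exact hy.of_iso (hglue.iso_of_starter_empty (ev_discrete hA hg _))
    replace hglue : GlueRel (A.lab e).starterPart R' R := by rwa [← ev_inl_starter e]
    have hlab := hA.2.2.2.1 e
    refine ⟨fun q hq => ?_, fun e' he' hS' hT' => ?_⟩
    · obtain rfl := cellOfState_injective hr hq
      by_cases hT : (A.lab e).T = univ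
      · rw [starterPart_eq_self hT] at hglue
        exact mem_langFrom_src (hy.1 _ (cellOfState_tgt hr ⟨hlab, hg e, hT⟩).symm) hglue
      · obtain ⟨R₃, hR₃, h₃⟩ := hy.2 e rfl hS hT
        exact mem_langFrom_src hR₃ (h₃.merge hlab (hg e) hglue)
    · rcases cellOfState_eq_inl he' with ⟨ht, -⟩ | ⟨hs, -⟩
      · exact absurd ht.2.2 hS'
      · exact absurd hs.2.2 hT'

theorem down (hA : A.IsPA) (hg : A.IsGST) {y z : (XofA A).cell}
    {Bs : Set ((XofA A).ev y).carrier} {R' R : PreIpomset σ}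
    (hface : (XofA A).face y ∅ Bs = some z) (hz : AcceptsFrom A z R')
    (hglue : GlueRel (((XofA A).ev y).terminator Bs) R' R) : AcceptsFrom A y R := by
  cases y with
  | inr q =>
    obtain ⟨-, rfl, rfl⟩ := face_inr hface
    exact hz.of_iso (hglue.iso_of_terminator_empty (ev_discrete hA hg _))
  | inl e =>
    rcases face_inl_down hface with ⟨rfl, rfl⟩ | ⟨hT, rfl, rfl⟩
    · exact hz.of_iso (hglue.iso_of_terminator_empty (ev_discrete hA hg _))
    replace hglue : GlueRel (A.lab e).terminatorPart R' R := by rwa [← ev_inl_terminator e]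
    have hR' := hz.1 (A.tgt e) rfl
    refine ⟨fun q hq => ?_, fun e' he' _ _ => ?_⟩
    · rcases cellOfState_eq_inl hq.symm with ⟨ht, rfl⟩ | ⟨hs, -⟩
      · rw [terminatorPart_eq_self ht.2.2] at hglue
        exact mem_langFrom_src hR' hglue
      · exact absurd hs.2.2 hT
    · obtain rfl := Sum.inl.inj he'
      exact ⟨R', hR', hglue⟩

end XofA.AcceptsFrom

theorem XofA.acceptsFrom_of_rec (hA : A.IsPA) (hg : A.IsGST) (hr : A.Reduced)
    {x z : (XofA A).cell} {α : PrePHDA.Path (XofA A) x z} {R : PreIpomset σ}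
    (h : PrePHDA.Rec α R) (hz : z ∈ (XofA A).accept) : AcceptsFrom A x R := by
  induction h with
  | nil x R hiso => exact .of_mem_accept hA hg hr hz hiso
  | up y As hface rest _ hglue ih => exact (ih hz).up hA hg hr hface hglue
  | down y Bs hface rest _ hglue ih => exact (ih hz).down hA hg hface hglue

end Language

theorem XofA_lang_general {σ : Type} (A : PAutomaton σ)
    (hA : A.IsPA) (hg : A.IsGST) (hr : A.Reduced) :
    (XofA A).lang = A.lang := by
  ext R
  constructor
  · rintro ⟨-, z, α, ⟨p, hp, rfl⟩, hz, hα⟩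
    obtain ⟨r, β, hr', hβ⟩ := (XofA.acceptsFrom_of_rec hA hg hr hα hz).1 p rfl
    exact ⟨p, r, β, hp, hr', hβ⟩
  · rintro ⟨p, r, β, hp, hr', hβ⟩
    obtain ⟨α, hα⟩ := exists_rec_XofA hA hg hr hβ
    exact ⟨_, _, α, ⟨p, hp, rfl⟩, ⟨r, hr', rfl⟩, hα⟩

/-- For a reduced gST-automaton `𝒜`, the partial HDA `X(𝒜)` recognizes
the same language: `L(X(𝒜)) = L(𝒜)`. -/
theorem XofA_lang {σ : Type} [Finite σ] (A : PAutomaton σ)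
    (hA : A.IsPA) (hg : A.IsGST) (hr : A.Reduced) :
    (XofA A).lang = A.lang :=
  XofA_lang_general A hA hg hr

end HDA
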